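/- arXiv:0811.2741 — 3 statements merged into one kernel-verified Lean document; each statement's English description precedes it below -/
import Mathlib

section
/- Let ς₁ and ς₂ be locally finite point configurations in ℝ^d with ς₁ ⊆ ς₂. Define the peeling sequence by C₁(ς) = convexHull(ς) and inductively C_{k+1}(ς) = convexHull({x ∈ ς : x ∉ boundary of C_k(ς)} restricted to points of ς inside C_k(ς)). Then for every k, C_k(ς₁) ⊆ C_k(ς₂). -/
open Set MeasureTheory Filter Topology ProbabilityTheory Pointwise

noncomputable section

abbrev Euc (d : ℕ) := EuclideanSpace ℝ (Fin d)

/-- The iterated "interior point" configurations of the peeling procedure: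
`peelSet ς 0 = ς` and `peelSet ς (n+1)` consists of the points of `peelSet ς n`
not on the boundary of its convex hull. -/
def peelSet {d : ℕ} (ς : Set (Euc d)) : ℕ → Set (Euc d)
  | 0 => ς
  | n + 1 => {x ∈ peelSet ς n | x ∉ frontier (convexHull ℝ (peelSet ς n))}

/-- `peelHull ς n` is the `(n+1)`-st convex hull `C_{n+1}(ς)` of the peeling procedure. -/
def peelHull {d : ℕ} (ς : Set (Euc d)) (n : ℕ) : Set (Euc d) :=
  convexHull ℝ (peelSet ς n)

/-- A configuration: countable with finitely many points outside each ball around 0. -/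
def IsConfiguration {d : ℕ} (ς : Set (Euc d)) : Prop :=
  ς.Countable ∧ ∀ δ : ℝ, 0 < δ → {x ∈ ς | δ ≤ ‖x‖}.Finite

/-- No `d+1` points of `ς` lie on a common hyperplane. -/
def GeneralPosition {d : ℕ} (ς : Set (Euc d)) : Prop :=
  ∀ s : Finset (Euc d), ↑s ⊆ ς → s.card = d + 1 →
    ¬ ∃ (f : Euc d →ₗ[ℝ] ℝ) (c : ℝ), f ≠ 0 ∧ ∀ x ∈ s, f x = c

/-- Non-unilateral configuration: every peel contains `0` as interior point. -/
def NonUnilateral {d : ℕ} (ς : Set (Euc d)) : Prop :=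
  ∀ k : ℕ, (0 : Euc d) ∈ interior (peelHull ς k)

/-- `pts` is a Poisson point process with intensity `μ`: counts in sets of finite
intensity are Poisson distributed and counts in disjoint sets are independent. -/
def IsPoissonPP {Ω : Type*} [MeasurableSpace Ω] (P : Measure Ω)
    {E : Type*} [MeasurableSpace E] (pts : Ω → Set E) (μ : Measure E) : Prop :=
  (∀ s : Set E, MeasurableSet s → μ s ≠ ⊤ →
      (∀ᵐ ω ∂P, (pts ω ∩ s).Finite) ∧
      ∀ k : ℕ, P {ω | (pts ω ∩ s).ncard = k} =
        ENNReal.ofReal (Real.exp (-(μ s).toReal) * (μ s).toReal ^ k / (Nat.factorial k))) ∧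
  (∀ n : ℕ, ∀ s : Fin n → Set E, (∀ i, MeasurableSet (s i)) →
      Pairwise (Function.onFun Disjoint s) →
      iIndepFun (fun i ω => (pts ω ∩ s i).ncard) P)

/-- The radial measure on `(0,∞)` with density `α r^{-α-1}`. -/
def radialMeasure (α : ℝ) : Measure ℝ :=
  ((volume : Measure ℝ).restrict (Ioi 0)).withDensity fun r => ENNReal.ofReal (α * r ^ (-α - 1))

/-- The intensity measure `θ × ν` transported to `ℝ^d \ {0}` via polar coordinates. -/
def intensityMeasure {d : ℕ} (α : ℝ) (ν : Measure (Metric.sphere (0 : Euc d) 1)) :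
    Measure (Euc d) :=
  Measure.map (fun p : ℝ × Metric.sphere (0 : Euc d) 1 => p.1 • (p.2 : Euc d))
    ((radialMeasure α).prod ν)

/-- i.i.d. sequence of standard (rate 1) exponential random variables. -/
def IsIIDExp {Ω : Type*} [MeasurableSpace Ω] (P : Measure Ω) (γ : ℕ → Ω → ℝ) : Prop :=
  iIndepFun γ P ∧ ∀ i, Measure.map (γ i) P = expMeasure 1


/-- Atomic intensity measure: superposition of radial measures on the rays `t • e i`. -/
def atomicIntensity {d l : ℕ} (α : ℝ) (ν : Fin l → ℝ) (e : Fin l → Euc d) : Measure (Euc d) :=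
  Measure.sum fun i : Fin l =>
    (ENNReal.ofReal (ν i)) • Measure.map (fun r : ℝ => r • e i) (radialMeasure α)

/-- Positive cone generated by a finite family of vectors. -/
def posCone {d l : ℕ} (e : Fin l → Euc d) : Set (Euc d) :=
  {x | ∃ c : Fin l → ℝ, (∀ i, 0 ≤ c i) ∧ x = ∑ i, c i • e i}

/-- The configuration formed by the points `ν_i^{1/α} Γ_{k+1}^{-1/α} e_i`. -/
def rayConfig {d l : ℕ} (α : ℝ) (ν : Fin l → ℝ) (e : Fin l → Euc d)
    {Ω : Type*} (γ : Fin l → ℕ → Ω → ℝ) (ω : Ω) : Set (Euc d) :=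
  ⋃ i : Fin l, Set.range fun k : ℕ =>
    ((ν i) ^ (1/α) * (∑ j ∈ Finset.range (k+1), γ i j ω) ^ (-(1/α))) • e i

/-- maximal norm over a set. -/
def maxNorm {d : ℕ} (A : Set (Euc d)) : ℝ := sSup ((fun x => ‖x‖) '' A)

theorem notMem_frontier_of_subset {X : Type*} [TopologicalSpace X] {s t : Set X} {x : X}
    (hst : s ⊆ t) (hxs : x ∈ s) (hx : x ∉ frontier s) : x ∉ frontier t :=
  fun hxt => hxt.2 (interior_mono hst (self_sdiff_frontier s ▸ ⟨hxs, hx⟩))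

theorem peelSet_mono {d : ℕ} {ς₁ ς₂ : Set (Euc d)} (hsub : ς₁ ⊆ ς₂) (n : ℕ) :
    peelSet ς₁ n ⊆ peelSet ς₂ n := by
  induction n with
  | zero => exact hsub
  | succ n ih =>
    rintro x ⟨hx, hx_frontier⟩
    exact ⟨ih hx, notMem_frontier_of_subset (convexHull_mono ih) (subset_convexHull ℝ _ hx)
      hx_frontier⟩

theorem peelHull_mono_general {d : ℕ} (ς₁ ς₂ : Set (Euc d)) (hsub : ς₁ ⊆ ς₂) :
    ∀ k : ℕ, peelHull ς₁ k ⊆ peelHull ς₂ k := fun k =>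
  convexHull_mono (peelSet_mono hsub k)

/-- monotonicity of the peeling procedure. -/
theorem peelHull_mono {d : ℕ} (ς₁ ς₂ : Set (Euc d))
    (h₁ : IsConfiguration ς₁) (h₂ : IsConfiguration ς₂) (hsub : ς₁ ⊆ ς₂) :
    ∀ k : ℕ, peelHull ς₁ k ⊆ peelHull ς₂ k :=
  peelHull_mono_general ς₁ ς₂ hsub

end
end

section
/- Let ς and ς′ be non-unilateral configurations in ℝ^d with no d+1 points on a common hyperplane, such that ς = ς′ ∪ {a} for a single point a ∉ ς′ with a ∉ C₁(ς′). Then a lies on the boundary of C₁(ς), the interior points of ς are contained in ς′, and C₂(ς′) ⊆ C₁(ς) while C₁(ς′) ⊆ C₁(ς). -/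
open Set MeasureTheory Filter Topology ProbabilityTheory Pointwise

noncomputable section

/-! Since `a ∉ conv ς'`, the rays from `a` through `conv ς'` form a pointed cone, so `a` is an
extreme point of `conv ς = conv (insert a ς')` and hence not an interior point of it. -/

section ConvexHullInsert

variable {𝕜 E : Type*} [Field 𝕜] [LinearOrder 𝕜] [IsStrictOrderedRing 𝕜]
  [AddCommGroup E] [Module 𝕜 E] {C s : Set E} {a : E}

theorem Convex.eq_zero_of_smul_sub_add_smul_sub_eq_zero (hC : Convex 𝕜 C) (ha : a ∉ C)
    {z w : E} (hz : z ∈ C) (hw : w ∈ C) {p q : 𝕜} (hp : 0 ≤ p) (hq : 0 ≤ q)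
    (h : p • (z - a) + q • (w - a) = 0) : p = 0 ∧ q = 0 := by
  by_contra hpq
  have hsum : 0 < p + q := by
    contrapose! hpq
    constructor <;> linarith
  refine ha ?_
  convert convex_iff_div.mp hC hz hw hp hq hsum using 1
  have hcomb : (p + q) • a = p • z + q • w := by linear_combination (norm := module) -h
  rw [div_eq_inv_mul, div_eq_inv_mul, mul_smul, mul_smul, ← smul_add, ← hcomb, smul_smul,
    inv_mul_cancel₀ hsum.ne', one_smul]

theorem mem_extremePoints_convexHull_insert (ha : a ∉ convexHull 𝕜 s) :
    a ∈ (convexHull 𝕜 (insert a s)).extremePoints 𝕜 := by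
  rcases s.eq_empty_or_nonempty with rfl | hs
  · simp
  rw [convexHull_insert hs, mem_extremePoints]
  refine ⟨subset_convexJoin_left (convexHull_nonempty_iff.mpr hs) rfl, ?_⟩
  have hray : ∀ x ∈ convexJoin 𝕜 {a} (convexHull 𝕜 s),
      ∃ z ∈ convexHull 𝕜 s, ∃ θ : 𝕜, 0 ≤ θ ∧ x = a + θ • (z - a) := by
    simp only [mem_convexJoin, mem_singleton_iff, exists_eq_left, segment_eq_image',
      mem_image]
    rintro x ⟨z, hz, θ, hθ, rfl⟩
    exact ⟨z, hz, θ, hθ.1, rfl⟩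
  rintro x₁ hx₁ x₂ hx₂ ⟨p, q, hp, hq, hpq, hx⟩
  obtain ⟨z, hz, θ, hθ, rfl⟩ := hray x₁ hx₁
  obtain ⟨w, hw, η, hη, rfl⟩ := hray x₂ hx₂
  have hcancel : (p * θ) • (z - a) + (q * η) • (w - a) = 0 := by
    linear_combination (norm := module) hx - hpq • a
  obtain ⟨hθ0, hη0⟩ := (convex_convexHull 𝕜 s).eq_zero_of_smul_sub_add_smul_sub_eq_zero ha hz hw
    (mul_nonneg hp.le hθ) (mul_nonneg hq.le hη) hcancel
  simp [(mul_eq_zero.mp hθ0).resolve_left hp.ne', (mul_eq_zero.mp hη0).resolve_left hq.ne']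

end ConvexHullInsert

theorem mem_frontier_convexHull_insert {E : Type*} [AddCommGroup E] [Module ℝ E]
    [TopologicalSpace E] [IsTopologicalAddGroup E] [ContinuousSMul ℝ E] {s : Set E} {a : E}
    (hs : s.Nonempty) (ha : a ∉ convexHull ℝ s) :
    a ∈ frontier (convexHull ℝ (insert a s)) := by
  obtain ⟨z, hz⟩ := hs
  have : Nontrivial E := ⟨⟨a, z, fun h => ha (h ▸ subset_convexHull ℝ s hz)⟩⟩
  exact ⟨subset_closure (subset_convexHull ℝ _ (mem_insert a s)),
    fun hint => (disjoint_interior_extremePoints _).notMem_of_mem_left hint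
      (mem_extremePoints_convexHull_insert ha)⟩

theorem peelHull_single_point_general {d : ℕ} (ς ς' : Set (Euc d)) (a : Euc d)
    (hnu' : NonUnilateral ς')
    (heq : ς = ς' ∪ {a}) (haC : a ∉ peelHull ς' 0) :
    a ∈ frontier (peelHull ς 0) ∧
    {x ∈ ς | x ∉ frontier (peelHull ς 0)} ⊆ ς' ∧
    peelHull ς' 1 ⊆ peelHull ς 0 ∧
    peelHull ς' 0 ⊆ peelHull ς 0 := by
  rw [union_singleton] at heq
  subst heq
  have hne : ς'.Nonempty := convexHull_nonempty_iff.mp ⟨0, interior_subset (hnu' 0)⟩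
  have hfront : a ∈ frontier (peelHull (insert a ς') 0) := mem_frontier_convexHull_insert hne haC
  refine ⟨hfront, ?_, ?_, convexHull_mono (subset_insert a ς')⟩
  · rintro x ⟨rfl | hx, hxf⟩
    exacts [absurd hfront hxf, hx]
  · exact convexHull_mono ((sep_subset _ _).trans (subset_insert a ς'))

/-- removing a single point `a` outside `C₁(ς')`. -/
theorem peelHull_single_point {d : ℕ} (ς ς' : Set (Euc d)) (a : Euc d)
    (hς : IsConfiguration ς) (hς' : IsConfiguration ς')
    (hgp : GeneralPosition ς) (hgp' : GeneralPosition ς')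
    (hnu : NonUnilateral ς) (hnu' : NonUnilateral ς')
    (heq : ς = ς' ∪ {a}) (ha : a ∉ ς') (haC : a ∉ peelHull ς' 0) :
    a ∈ frontier (peelHull ς 0) ∧
    {x ∈ ς | x ∉ frontier (peelHull ς 0)} ⊆ ς' ∧
    peelHull ς' 1 ⊆ peelHull ς 0 ∧
    peelHull ς' 0 ⊆ peelHull ς 0 :=
  peelHull_single_point_general ς ς' a hnu' heq haC

end
end

section
/- Suppose the spectral measure ν is supported on d+1 unit vectors e⁽¹⁾,…,e⁽^{d+1}⁾ whose positive cone is ℝ^d, with masses ν₁,…,ν_{d+1}. Let π be the Poisson point process with intensity θ × ν, and let x_k⁽ⁱ⁾ be the k-th largest point of π on the ray through e⁽ⁱ⁾. Then the k-th peeled convex hull C_k of π is the simplex with vertices x_k⁽¹⁾, …, x_k⁽^{d+1}⁾, and setting ρ_n = max_{x∈C_n}|x|, the rescaled hulls ρ_n^{−1} C_n converge in Hausdorff distance almost surely to the simplex with vertices (t_i/t⁺) e⁽ⁱ⁾, where t_i = ν_i^{1/α} and t⁺ = max_i t_i. -/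
open Set MeasureTheory Filter Topology ProbabilityTheory Pointwise

noncomputable section

/-!
The `d + 1` rays positively span `ℝ^d`, so one point on each ray always gives an affine basis
whose simplex contains `0` in its interior. Hence a peel removes exactly the outermost remaining
point of every ray (a vertex), while every deeper point is a strict contraction of a vertex
towards `0` and is interior. The `k`-th point on ray `i` is `ν_i^{1/α} Γ_{i,k+1}^{-1/α}` with
`Γ_{i,k+1}` a sum of `k + 1` i.i.d. standard exponentials, so by the strong law `k^{1/α}` times it
tends to `ν_i^{1/α}`. Dividing by the largest vertex norm cancels the common factor `k^{1/α}`, and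
the Hausdorff distance between two simplices is at most the total displacement of their vertices.
-/

section ConvexHullOfFamily

variable {ι E : Type*} [Fintype ι]

lemma mem_convexHull_range_iff [AddCommGroup E] [Module ℝ E] {v : ι → E} {x : E} :
    x ∈ convexHull ℝ (range v) ↔
      ∃ w : ι → ℝ, (∀ i, 0 ≤ w i) ∧ ∑ i, w i = 1 ∧ ∑ i, w i • v i = x := by
  classical
  constructor
  · rw [convexHull_range_eq_exists_affineCombination]
    rintro ⟨s, w, hw₀, hw₁, rfl⟩
    refine ⟨fun i => if i ∈ s then w i else 0, fun i => ?_, ?_, ?_⟩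
    · dsimp only
      split_ifs with hi
      exacts [hw₀ i hi, le_rfl]
    · rwa [Finset.sum_ite_mem, Finset.univ_inter]
    · simp_rw [ite_smul, zero_smul]
      rw [Finset.sum_ite_mem, Finset.univ_inter, s.affineCombination_eq_linear_combination v w hw₁]
  · rintro ⟨w, hw₀, hw₁, rfl⟩
    exact mem_convexHull_of_exists_fintype w v hw₀ hw₁ (fun i => mem_range_self i) rfl

variable [SeminormedAddCommGroup E] [NormedSpace ℝ E]

lemma convexHull_range_subset_closedBall [Nonempty ι] (v : ι → E) :
    convexHull ℝ (range v) ⊆ Metric.closedBall 0 (⨆ i, ‖v i‖) :=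
  convexHull_min (range_subset_iff.2 fun i => mem_closedBall_zero_iff.2 <|
    le_ciSup (f := fun i => ‖v i‖) (Finite.bddAbove_range _) i) (convex_closedBall 0 _)

lemma exists_dist_le_of_mem_convexHull_range {u w : ι → E} {x : E}
    (hx : x ∈ convexHull ℝ (range u)) :
    ∃ y ∈ convexHull ℝ (range w), dist x y ≤ ∑ i, dist (u i) (w i) := by
  obtain ⟨c, hc₀, hc₁, rfl⟩ := mem_convexHull_range_iff.1 hx
  refine ⟨∑ i, c i • w i, mem_convexHull_range_iff.2 ⟨c, hc₀, hc₁, rfl⟩, ?_⟩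
  have hc_le_one : ∀ i, c i ≤ 1 := fun i =>
    hc₁ ▸ Finset.single_le_sum (fun j _ => hc₀ j) (Finset.mem_univ i)
  calc dist (∑ i, c i • u i) (∑ i, c i • w i)
      ≤ ∑ i, dist (c i • u i) (c i • w i) := dist_sum_sum_le _ _ _
    _ ≤ ∑ i, dist (u i) (w i) := Finset.sum_le_sum fun i _ => by
        rw [dist_smul₀, Real.norm_of_nonneg (hc₀ i)]
        exact mul_le_of_le_one_left dist_nonneg (hc_le_one i)

lemma hausdorffDist_convexHull_range_le (u w : ι → E) :
    Metric.hausdorffDist (convexHull ℝ (range u)) (convexHull ℝ (range w)) ≤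
      ∑ i, dist (u i) (w i) := by
  refine Metric.hausdorffDist_le_of_mem_dist (Finset.sum_nonneg fun i _ => dist_nonneg)
    (fun x hx => exists_dist_le_of_mem_convexHull_range hx) fun x hx => ?_
  simpa only [dist_comm (u _)] using exists_dist_le_of_mem_convexHull_range (w := u) hx

end ConvexHullOfFamily

lemma maxNorm_convexHull_range {d : ℕ} {ι : Type*} [Fintype ι] [Nonempty ι] (v : ι → Euc d) :
    maxNorm (convexHull ℝ (range v)) = ⨆ i, ‖v i‖ := by
  obtain ⟨i₀, hi₀⟩ := exists_eq_ciSup_of_finite (f := fun i => ‖v i‖)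
  refine IsGreatest.csSup_eq ⟨⟨v i₀, subset_convexHull ℝ _ (mem_range_self i₀), hi₀⟩, ?_⟩
  rintro _ ⟨x, hx, rfl⟩
  exact mem_closedBall_zero_iff.1 (convexHull_range_subset_closedBall v hx)

section Simplex

variable {d : ℕ} {v : Fin (d+1) → Euc d}

lemma posCone_pos_smul_eq_univ {e : Fin (d+1) → Euc d} (hcone : posCone e = univ)
    {b : Fin (d+1) → ℝ} (hb : ∀ i, 0 < b i) : posCone (fun i => b i • e i) = univ := by
  refine eq_univ_of_forall fun x => ?_
  obtain ⟨c, hc, rfl⟩ : x ∈ posCone e := hcone ▸ mem_univ x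
  refine ⟨fun i => c i / b i, fun i => div_nonneg (hc i) (hb i).le, ?_⟩
  simp_rw [smul_smul, div_mul_cancel₀ _ (hb _).ne']

lemma span_range_eq_top_of_posCone_eq_univ (hcone : posCone v = univ) :
    Submodule.span ℝ (range v) = ⊤ := by
  refine eq_top_iff.2 fun x _ => ?_
  obtain ⟨c, -, rfl⟩ : x ∈ posCone v := hcone ▸ mem_univ x
  exact Submodule.sum_mem _ fun i _ => Submodule.smul_mem _ _ (Submodule.subset_span ⟨i, rfl⟩)

lemma exists_pos_convexCombination_eq_zero (hcone : posCone v = univ) :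
    ∃ w : Fin (d+1) → ℝ, (∀ i, 0 < w i) ∧ ∑ i, w i = 1 ∧ ∑ i, w i • v i = 0 := by
  obtain ⟨c, hc, hc_sum⟩ : -∑ i, v i ∈ posCone v := hcone ▸ mem_univ _
  -- `∑ (1 + c i) • v i = 0`; normalise these positive coefficients to sum `1`.
  have hT : 0 < ∑ i, (1 + c i) :=
    Finset.sum_pos (fun i _ => by linarith [hc i]) Finset.univ_nonempty
  refine ⟨fun i => (1 + c i) / ∑ j, (1 + c j), fun i => div_pos (by linarith [hc i]) hT, ?_, ?_⟩
  · rw [← Finset.sum_div, div_self hT.ne']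
  · simp_rw [div_eq_inv_mul, mul_smul, ← Finset.smul_sum, add_smul, one_smul,
      Finset.sum_add_distrib, ← hc_sum, add_neg_cancel, smul_zero]

lemma vectorSpan_range_eq_top_of_posCone_eq_univ (hcone : posCone v = univ) :
    vectorSpan ℝ (range v) = ⊤ := by
  obtain ⟨w, -, hw₁, hw₀⟩ := exists_pos_convexCombination_eq_zero hcone
  rw [eq_top_iff, ← span_range_eq_top_of_posCone_eq_univ hcone, Submodule.span_le]
  rintro _ ⟨j, rfl⟩
  have hvj : v j = ∑ i, w i • (v j - v i) := by
    simp_rw [smul_sub, Finset.sum_sub_distrib, ← Finset.sum_smul, hw₁, one_smul, hw₀, sub_zero]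
  rw [hvj]
  exact Submodule.sum_mem _ fun i _ =>
    Submodule.smul_mem _ _ (vsub_mem_vectorSpan ℝ (mem_range_self j) (mem_range_self i))

lemma exists_affineBasis_of_posCone_eq_univ (hcone : posCone v = univ) :
    ∃ B : AffineBasis (Fin (d+1)) ℝ (Euc d), ⇑B = v := by
  have hspan := vectorSpan_range_eq_top_of_posCone_eq_univ hcone
  have hind : AffineIndependent ℝ v := by
    rw [affineIndependent_iff_finrank_vectorSpan_eq ℝ v (Fintype.card_fin _), hspan]
    simp
  exact ⟨⟨v, hind, (AffineSubspace.affineSpan_eq_top_iff_vectorSpan_eq_top_of_nonempty ℝ _ _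
    (range_nonempty v)).2 hspan⟩, rfl⟩

lemma zero_mem_interior_convexHull_of_posCone_eq_univ (hcone : posCone v = univ) :
    (0 : Euc d) ∈ interior (convexHull ℝ (range v)) := by
  obtain ⟨B, rfl⟩ := exists_affineBasis_of_posCone_eq_univ hcone
  obtain ⟨w, hw, hw₁, hw₀⟩ := exists_pos_convexCombination_eq_zero hcone
  rw [B.interior_convexHull]
  intro i
  rw [← hw₀, ← Finset.univ.affineCombination_eq_linear_combination _ _ hw₁,
    B.coord_apply_combination_of_mem (Finset.mem_univ i) hw₁]
  exact hw i

lemma notMem_interior_convexHull_of_posCone_eq_univ (hd : 0 < d) (hcone : posCone v = univ)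
    (i : Fin (d+1)) : v i ∉ interior (convexHull ℝ (range v)) := by
  obtain ⟨B, rfl⟩ := exists_affineBasis_of_posCone_eq_univ hcone
  have : Nontrivial (Fin (d+1)) := Fin.nontrivial_iff_two_le.2 (by omega)
  obtain ⟨j, hj⟩ := exists_ne i
  rw [B.interior_convexHull]
  intro hmem
  simpa [B.coord_apply, hj] using hmem j

lemma smul_mem_interior_convexHull_of_posCone_eq_univ (hcone : posCone v = univ)
    (i : Fin (d+1)) {s : ℝ} (hs₀ : 0 ≤ s) (hs₁ : s < 1) :
    s • v i ∈ interior (convexHull ℝ (range v)) := by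
  simpa using (convex_convexHull ℝ _).combo_interior_closure_mem_interior
    (zero_mem_interior_convexHull_of_posCone_eq_univ hcone)
    (subset_closure (subset_convexHull ℝ _ (mem_range_self i))) (sub_pos.2 hs₁) hs₀ (by ring)

end Simplex

section Peeling

variable {d : ℕ} {e : Fin (d+1) → Euc d} {a : ℕ → Fin (d+1) → ℝ}

lemma smul_eq_div_smul_smul {E : Type*} [AddCommGroup E] [Module ℝ E] (x : E) (r : ℝ) {s : ℝ}
    (hs : s ≠ 0) : r • x = (r / s) • s • x := by
  rw [smul_smul, div_mul_cancel₀ _ hs]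

lemma convexHull_rays_eq_convexHull_vertices (hcone : posCone e = univ) (ha : ∀ n i, 0 < a n i)
    (hanti : ∀ i, StrictAnti (a · i)) (k : ℕ) :
    convexHull ℝ (⋃ i, range fun m => a (m + k) i • e i) =
      convexHull ℝ (range fun i => a k i • e i) := by
  refine (convexHull_min ?_ (convex_convexHull ℝ _)).antisymm
    (convexHull_mono fun _ ⟨i, hi⟩ => mem_iUnion.2 ⟨i, 0, by simpa using hi⟩)
  simp only [iUnion_subset_iff, range_subset_iff]
  intro i m
  have hcone' := posCone_pos_smul_eq_univ hcone (ha k)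
  rw [smul_eq_div_smul_smul _ _ (ha k i).ne']
  exact (convex_convexHull ℝ _).smul_mem_of_zero_mem
    (interior_subset (zero_mem_interior_convexHull_of_posCone_eq_univ hcone'))
    (subset_convexHull ℝ _ (mem_range_self i))
    ⟨div_nonneg (ha _ i).le (ha k i).le,
      (div_le_one (ha k i)).2 ((hanti i).antitone (Nat.le_add_left k m))⟩

lemma peelSet_rays (hd : 0 < d) (hcone : posCone e = univ) (ha : ∀ n i, 0 < a n i)
    (hanti : ∀ i, StrictAnti (a · i)) (k : ℕ) :
    peelSet (⋃ i, range fun m => a m i • e i) k = ⋃ i, range fun m => a (m + k) i • e i := by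
  induction k with
  | zero => rfl
  | succ k ih =>
    have hcone' := posCone_pos_smul_eq_univ hcone (ha k)
    rw [peelSet, ih, convexHull_rays_eq_convexHull_vertices hcone ha hanti k,
      ((Set.finite_range _).isCompact_convexHull ℝ).isClosed.frontier_eq]
    ext x
    simp only [mem_ofPred_eq, mem_iUnion, mem_range, Set.mem_sdiff, not_and, not_not]
    constructor
    · rintro ⟨⟨i, m, rfl⟩, hx⟩
      cases m with
      | zero =>
        exact absurd (hx (subset_convexHull ℝ _ ⟨i, by simp⟩))
          (by simp [notMem_interior_convexHull_of_posCone_eq_univ hd hcone' i])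
      | succ m => exact ⟨i, m, by congr 2; omega⟩
    · rintro ⟨i, m, rfl⟩
      refine ⟨⟨i, m + 1, by congr 2; omega⟩, fun _ => ?_⟩
      rw [smul_eq_div_smul_smul _ _ (ha k i).ne']
      exact smul_mem_interior_convexHull_of_posCone_eq_univ hcone' i
        (div_nonneg (ha _ i).le (ha k i).le) ((div_lt_one (ha k i)).2 (hanti i (by omega)))

lemma peelHull_rays (hd : 0 < d) (hcone : posCone e = univ) (ha : ∀ n i, 0 < a n i)
    (hanti : ∀ i, StrictAnti (a · i)) (k : ℕ) :
    peelHull (⋃ i, range fun m => a m i • e i) k = convexHull ℝ (range fun i => a k i • e i) := by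
  rw [peelHull, peelSet_rays hd hcone ha hanti, convexHull_rays_eq_convexHull_vertices hcone ha hanti]

end Peeling

section NormalizedLimit

variable {ι β : Type*} [Fintype ι] [Nonempty ι] {l : Filter β}

lemma tendsto_div_iSup_of_tendsto_mul {a : β → ι → ℝ} {c : β → ℝ} {t : ι → ℝ}
    (hc : ∀ n, 0 < c n) (hlim : ∀ i, Tendsto (fun n => c n * a n i) l (𝓝 (t i)))
    (ht : 0 < ⨆ i, t i) (i : ι) :
    Tendsto (fun n => a n i / ⨆ j, a n j) l (𝓝 (t i / ⨆ j, t j)) := by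
  have hsup : Tendsto (fun n => ⨆ j, c n * a n j) l (𝓝 (⨆ j, t j)) := by
    simp_rw [← Finset.sup'_univ_eq_ciSup]
    exact Tendsto.finset_sup'_nhds_apply Finset.univ_nonempty fun j _ => hlim j
  refine ((hlim i).div hsup ht.ne').congr fun n => ?_
  rw [Pi.div_apply, ← Real.mul_iSup_of_nonneg (hc n).le, mul_div_mul_left _ _ (hc n).ne']

variable {d : ℕ} {e : ι → Euc d}

lemma inv_maxNorm_smul_convexHull (he : ∀ i, ‖e i‖ = 1) {b : ι → ℝ} (hb : ∀ i, 0 < b i) :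
    (maxNorm (convexHull ℝ (range fun i => b i • e i)))⁻¹ •
        convexHull ℝ (range fun i => b i • e i) =
      convexHull ℝ (range fun i => (b i / ⨆ j, b j) • e i) := by
  have hnorm : ∀ i, ‖b i • e i‖ = b i := fun i => by
    rw [norm_smul, he, mul_one, Real.norm_of_nonneg (hb i).le]
  rw [maxNorm_convexHull_range, ← convexHull_smul, smul_set_range]
  simp_rw [hnorm, smul_smul, inv_mul_eq_div]

theorem tendsto_hausdorffDist_inv_maxNorm_smul (he : ∀ i, ‖e i‖ = 1) {K : β → Set (Euc d)}
    {a : β → ι → ℝ} (hK : ∀ n, K n = convexHull ℝ (range fun i => a n i • e i))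
    (ha : ∀ n i, 0 < a n i) {c : β → ℝ} (hc : ∀ n, 0 < c n) {t : ι → ℝ}
    (hlim : ∀ i, Tendsto (fun n => c n * a n i) l (𝓝 (t i))) (ht : 0 < ⨆ i, t i) :
    Tendsto (fun n => Metric.hausdorffDist ((maxNorm (K n))⁻¹ • K n)
      (convexHull ℝ (range fun i => (t i / ⨆ j, t j) • e i))) l (𝓝 0) := by
  have hdist : Tendsto (fun n => ∑ i, dist ((a n i / ⨆ j, a n j) • e i)
      ((t i / ⨆ j, t j) • e i)) l (𝓝 0) := by
    simpa using tendsto_finsetSum Finset.univ fun i _ =>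
      ((tendsto_div_iSup_of_tendsto_mul hc hlim ht i).smul_const (e i)).dist
        (tendsto_const_nhds (x := (t i / ⨆ j, t j) • e i))
  refine squeeze_zero (fun n => Metric.hausdorffDist_nonneg) (fun n => ?_) hdist
  rw [hK n, inv_maxNorm_smul_convexHull he (ha n)]
  exact hausdorffDist_convexHull_range_le _ _

end NormalizedLimit

lemma tendsto_rpow_mul_rpow_neg_of_tendsto_div {β : Type*} {l : Filter β} {f g : β → ℝ}
    (hf : ∀ n, 0 < f n) (hg : ∀ n, 0 < g n) (h : Tendsto (fun n => g n / f n) l (𝓝 1)) (p : ℝ) :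
    Tendsto (fun n => f n ^ p * g n ^ (-p)) l (𝓝 1) := by
  have := (Real.continuousAt_rpow_const 1 (-p) (Or.inl one_ne_zero)).tendsto.comp h
  rw [Real.one_rpow] at this
  refine this.congr fun n => ?_
  rw [Function.comp_apply, Real.div_rpow (hg n).le (hf n).le, Real.rpow_neg (hf n).le,
    div_inv_eq_mul, mul_comm]

section Exponential

lemma expMeasure_Iic_zero (r : ℝ) : expMeasure r (Iic 0) = 0 := by
  rw [expMeasure, gammaMeasure, withDensity_apply _ measurableSet_Iic,
    Measure.restrict_congr_set Iio_ae_eq_Iic.symm]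
  exact lintegral_gammaPDF_of_nonpos le_rfl

lemma ae_pos_expMeasure (r : ℝ) : ∀ᵐ x ∂expMeasure r, 0 < x :=
  ae_iff.2 <| measure_mono_null (fun _ hx => not_lt.1 hx) (expMeasure_Iic_zero r)

lemma measurable_exponentialPDF (r : ℝ) : Measurable (exponentialPDF r) :=
  (measurable_exponentialPDFReal r).ennreal_ofReal

lemma toReal_exponentialPDF_smul_self {r : ℝ} (hr : 0 < r) :
    (fun x => (exponentialPDF r x).toReal • x) =
      (Ioi 0).indicator fun x => r * (x ^ ((2 : ℝ) - 1) * Real.exp (-(r * x))) := by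
  ext x
  rcases lt_or_ge 0 x with hx | hx
  · rw [exponentialPDF_of_nonneg hx.le, ENNReal.toReal_ofReal (by positivity),
      indicator_of_mem (show x ∈ Ioi 0 from hx), smul_eq_mul]
    norm_num
    ring
  · rw [indicator_of_notMem (show x ∉ Ioi 0 from not_lt.2 hx)]
    rcases hx.lt_or_eq with hx | rfl
    · simp [exponentialPDF_of_neg hx]
    · simp

lemma integral_toReal_exponentialPDF_smul_self {r : ℝ} (hr : 0 < r) :
    ∫ x, (exponentialPDF r x).toReal • x = r⁻¹ := by
  rw [toReal_exponentialPDF_smul_self hr, integral_indicator measurableSet_Ioi, integral_const_mul,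
    Real.integral_rpow_mul_exp_neg_mul_Ioi two_pos hr, Real.Gamma_two, Real.rpow_two, mul_one]
  field_simp

lemma integral_id_expMeasure {r : ℝ} (hr : 0 < r) : ∫ x, x ∂expMeasure r = r⁻¹ := by
  rw [← integral_toReal_exponentialPDF_smul_self hr]
  exact integral_withDensity_eq_integral_toReal_smul (measurable_exponentialPDF r)
    (ae_of_all _ fun _ => ENNReal.ofReal_lt_top) _

lemma integrable_id_expMeasure {r : ℝ} (hr : 0 < r) : Integrable (fun x => x) (expMeasure r) := by
  refine (integrable_withDensity_iff_integrable_smul' (measurable_exponentialPDF r)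
    (ae_of_all _ fun _ => ENNReal.ofReal_lt_top)).2 (.of_integral_ne_zero ?_)
  rw [integral_toReal_exponentialPDF_smul_self hr]
  positivity

variable {Ω : Type*} [MeasurableSpace Ω] {P : Measure Ω} {r : ℝ}

lemma aemeasurable_of_map_eq_expMeasure (hr : 0 < r) {X : Ω → ℝ}
    (hX : P.map X = expMeasure r) : AEMeasurable X P :=
  have := isProbabilityMeasure_expMeasure hr
  .of_map_ne_zero (hX ▸ IsProbabilityMeasure.ne_zero _)

lemma ae_pos_of_map_eq_expMeasure (hr : 0 < r) {X : Ω → ℝ} (hX : P.map X = expMeasure r) :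
    ∀ᵐ ω ∂P, 0 < X ω :=
  ae_of_ae_map (aemeasurable_of_map_eq_expMeasure hr hX) (hX ▸ ae_pos_expMeasure r)

theorem ae_tendsto_sum_range_div_of_map_eq_expMeasure (hr : 0 < r) {γ : ℕ → Ω → ℝ}
    (hind : Pairwise fun j k => IndepFun (γ j) (γ k) P)
    (hlaw : ∀ k, P.map (γ k) = expMeasure r) :
    ∀ᵐ ω ∂P, Tendsto (fun n : ℕ => (∑ j ∈ Finset.range n, γ j ω) / n) atTop (𝓝 r⁻¹) := by
  have hmeas k := aemeasurable_of_map_eq_expMeasure hr (hlaw k)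
  have hint : Integrable (γ 0) P := by
    have := integrable_id_expMeasure hr
    rw [← hlaw 0] at this
    exact (integrable_map_measure aestronglyMeasurable_id (hmeas 0)).1 this
  have hmean : P[γ 0] = r⁻¹ := by
    rw [← integral_id_expMeasure hr, ← hlaw 0]
    exact (integral_map (hmeas 0) aestronglyMeasurable_id).symm
  simpa only [hmean] using strong_law_ae_real γ hint hind fun k =>
    ⟨hmeas k, hmeas 0, by rw [hlaw, hlaw]⟩

end Exponential

theorem simplex_limit_shape_general {d : ℕ} {Ω : Type*} [MeasurableSpace Ω]
    (P : Measure Ω) (α : ℝ) (hα : 0 < α)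
    (e : Fin (d+1) → Euc d) (he : ∀ i, ‖e i‖ = 1) (hcone : posCone e = Set.univ)
    (ν : Fin (d+1) → ℝ) (hν : ∀ i, 0 < ν i)
    (γ : Fin (d+1) → ℕ → Ω → ℝ)
    (hind : iIndepFun
      (fun (p : Fin (d+1) × ℕ) ω => γ p.1 p.2 ω) P)
    (hlaw : ∀ i k, Measure.map (γ i k) P = expMeasure 1) :
    ∀ᵐ ω ∂P,
      (∀ k : ℕ, peelHull (rayConfig α ν e γ ω) k =
        convexHull ℝ (Set.range fun i : Fin (d+1) =>
          ((ν i) ^ (1/α) * (∑ j ∈ Finset.range (k+1), γ i j ω) ^ (-(1/α))) • e i)) ∧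
      Tendsto (fun n : ℕ =>
        Metric.hausdorffDist
          ((maxNorm (peelHull (rayConfig α ν e γ ω) n))⁻¹ • peelHull (rayConfig α ν e γ ω) n)
          (convexHull ℝ (Set.range fun i : Fin (d+1) =>
            ((ν i) ^ (1/α) / ⨆ j : Fin (d+1), (ν j) ^ (1/α)) • e i)))
        atTop (nhds 0) := by
  have hd : 0 < d := Nat.pos_of_ne_zero fun hd => by
    subst hd
    simpa [Subsingleton.elim (e 0) 0] using he 0
  have hpos : ∀ᵐ ω ∂P, ∀ i k, 0 < γ i k ω :=
    ae_all_iff.2 fun i => ae_all_iff.2 fun k => ae_pos_of_map_eq_expMeasure one_pos (hlaw i k)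
  have hlln : ∀ᵐ ω ∂P, ∀ i,
      Tendsto (fun n : ℕ => (∑ j ∈ Finset.range n, γ i j ω) / n) atTop (𝓝 1) :=
    ae_all_iff.2 fun i => inv_one (G := ℝ) ▸ ae_tendsto_sum_range_div_of_map_eq_expMeasure one_pos
      (fun k l hkl => hind.indepFun (i := (i, k)) (j := (i, l)) fun h => hkl (Prod.ext_iff.1 h).2)
      (hlaw i)
  filter_upwards [hpos, hlln] with ω hpos hlln
  set S : ℕ → Fin (d+1) → ℝ := fun n i => ∑ j ∈ Finset.range (n+1), γ i j ω
  have hS_pos n i : 0 < S n i := Finset.sum_pos (fun j _ => hpos i j) Finset.nonempty_range_add_one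
  have hS_mono i : StrictMono (S · i) := strictMono_nat_of_lt_succ fun n => by
    simpa [S, Finset.sum_range_succ _ (n + 1)] using hpos i (n + 1)
  have hS_lim i : Tendsto (fun n : ℕ => S n i / ((n : ℝ) + 1)) atTop (𝓝 1) := by
    simpa [S, Function.comp_def] using (hlln i).comp (tendsto_add_atTop_nat 1)
  set a : ℕ → Fin (d+1) → ℝ := fun n i => ν i ^ (1/α) * S n i ^ (-(1/α))
  have ha_pos n i : 0 < a n i := by have := hν i; have := hS_pos n i; positivity
  have ha_anti i : StrictAnti (a · i) := fun m n hmn =>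
    mul_lt_mul_of_pos_left (Real.rpow_lt_rpow_of_neg (hS_pos m i) (hS_mono i hmn)
      (by simpa using hα)) (Real.rpow_pos_of_pos (hν i) _)
  have hpeel : ∀ k, peelHull (rayConfig α ν e γ ω) k = convexHull ℝ (range fun i => a k i • e i) :=
    peelHull_rays hd hcone ha_pos ha_anti
  refine ⟨hpeel, tendsto_hausdorffDist_inv_maxNorm_smul he hpeel ha_pos
    (c := fun n : ℕ => ((n : ℝ) + 1) ^ (1/α)) (fun n => by positivity) (fun i => ?_) ?_⟩
  · simpa [a, mul_left_comm] using (tendsto_rpow_mul_rpow_neg_of_tendsto_div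
      (fun n => by positivity) (hS_pos · i) (hS_lim i) (1/α)).const_mul (ν i ^ (1/α))
  · exact (Real.rpow_pos_of_pos (hν 0) _).trans_le
      (le_ciSup (f := fun j => ν j ^ (1/α)) (Finite.bddAbove_range _) 0)

/-- with `d+1` atoms whose cone is `ℝ^d`, every peel is the simplex with
vertices the current largest points on the rays, and the rescaled peels converge to the
simplex with vertices `(t_i/t⁺) e_i`. -/
theorem simplex_limit_shape {d : ℕ} {Ω : Type*} [MeasurableSpace Ω]
    (P : Measure Ω) [IsProbabilityMeasure P] (α : ℝ) (hα : 0 < α)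
    (e : Fin (d+1) → Euc d) (he : ∀ i, ‖e i‖ = 1) (hcone : posCone e = Set.univ)
    (ν : Fin (d+1) → ℝ) (hν : ∀ i, 0 < ν i) (hsum : ∑ i, ν i = 1)
    (γ : Fin (d+1) → ℕ → Ω → ℝ)
    (hind : iIndepFun
      (fun (p : Fin (d+1) × ℕ) ω => γ p.1 p.2 ω) P)
    (hlaw : ∀ i k, Measure.map (γ i k) P = expMeasure 1) :
    ∀ᵐ ω ∂P,
      (∀ k : ℕ, peelHull (rayConfig α ν e γ ω) k =
        convexHull ℝ (Set.range fun i : Fin (d+1) =>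
          ((ν i) ^ (1/α) * (∑ j ∈ Finset.range (k+1), γ i j ω) ^ (-(1/α))) • e i)) ∧
      Tendsto (fun n : ℕ =>
        Metric.hausdorffDist
          ((maxNorm (peelHull (rayConfig α ν e γ ω) n))⁻¹ • peelHull (rayConfig α ν e γ ω) n)
          (convexHull ℝ (Set.range fun i : Fin (d+1) =>
            ((ν i) ^ (1/α) / ⨆ j : Fin (d+1), (ν j) ^ (1/α)) • e i)))
        atTop (nhds 0) :=
  simplex_limit_shape_general P α hα e he hcone ν hν γ hind hlaw

end
end
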